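/- arXiv:1303.4789 — 3 statements merged into one kernel-verified Lean document; each statement's English description precedes it below -/
import Mathlib

section
/- The scalar Forchheimer relation is monotone: for β > 0 and the map F : ℝⁿ → ℝⁿ defined by F(η) = G(‖η‖)·η with G(ξ) = 2/(1+√(1+4βξ)), one has ⟨F(η₁) − F(η₂), η₁ − η₂⟩ ≥ 0 for all η₁, η₂ ∈ ℝⁿ. -/
open scoped RealInnerProductSpace

open Set

/-- The monotonicity criterion for radial maps `x ↦ g ‖x‖ • x`: expanding the inner product and
applying Cauchy–Schwarz to the cross term leaves `(‖x‖ - ‖y‖) * (‖x‖ g ‖x‖ - ‖y‖ g ‖y‖)`. -/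
theorem inner_smul_norm_sub_smul_norm_nonneg {E : Type*} [NormedAddCommGroup E]
    [InnerProductSpace ℝ E] {g : ℝ → ℝ} (hg : ∀ t, 0 ≤ t → 0 ≤ g t)
    (hmono : MonotoneOn (fun t => t * g t) (Ici 0)) (x y : E) :
    0 ≤ ⟪g ‖x‖ • x - g ‖y‖ • y, x - y⟫ := by
  set a := ‖x‖
  set b := ‖y‖
  have ha : 0 ≤ a := norm_nonneg x
  have hb : 0 ≤ b := norm_nonneg y
  have hexpand : ⟪g a • x - g b • y, x - y⟫ = g a * a ^ 2 + g b * b ^ 2 - (g a + g b) * ⟪x, y⟫ := by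
    simp only [inner_sub_left, inner_sub_right, real_inner_smul_left, real_inner_self_eq_norm_sq,
      real_inner_comm x y]
    ring
  have hcs : 0 ≤ (g a + g b) * (a * b - ⟪x, y⟫) :=
    mul_nonneg (add_nonneg (hg a ha) (hg b hb)) (sub_nonneg.2 (real_inner_le_norm x y))
  have hradial : 0 ≤ (a - b) * (a * g a - b * g b) := by
    rcases le_total a b with hab | hab
    · exact mul_nonneg_of_nonpos_of_nonpos (sub_nonpos.2 hab) (sub_nonpos.2 (hmono ha hb hab))
    · exact mul_nonneg (sub_nonneg.2 hab) (sub_nonneg.2 (hmono hb ha hab))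
  rw [hexpand]
  nlinarith

noncomputable def forchheimerCoeff (β ξ : ℝ) : ℝ :=
  2 / (1 + √(1 + 4 * β * ξ))

theorem forchheimerCoeff_nonneg (β ξ : ℝ) : 0 ≤ forchheimerCoeff β ξ := by
  unfold forchheimerCoeff
  positivity

theorem mul_forchheimerCoeff {β ξ : ℝ} (hβ : β ≠ 0) (hξ : 0 ≤ 1 + 4 * β * ξ) :
    ξ * forchheimerCoeff β ξ = (√(1 + 4 * β * ξ) - 1) / (2 * β) := by
  have hsq : √(1 + 4 * β * ξ) ^ 2 = 1 + 4 * β * ξ := Real.sq_sqrt hξ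
  have hpos : 0 < 1 + √(1 + 4 * β * ξ) := by positivity
  unfold forchheimerCoeff
  rw [mul_div_assoc', div_eq_div_iff hpos.ne' (by positivity)]
  linear_combination -hsq

theorem monotoneOn_mul_forchheimerCoeff {β : ℝ} (hβ : 0 < β) :
    MonotoneOn (fun ξ => ξ * forchheimerCoeff β ξ) (Ici 0) := by
  intro a ha b hb hab
  have harg : ∀ ξ ∈ Ici (0 : ℝ), 0 ≤ 1 + 4 * β * ξ := fun ξ hξ => by
    have : (0 : ℝ) ≤ ξ := hξ
    positivity
  simp only [mul_forchheimerCoeff hβ.ne' (harg a ha), mul_forchheimerCoeff hβ.ne' (harg b hb)]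
  gcongr

theorem forchheimer_map_monotone_general
    (n : ℕ) (β : ℝ) (hβ : 0 < β)
    (G : ℝ → ℝ)
    (hG : ∀ ξ, G ξ = 2 / (1 + Real.sqrt (1 + 4 * β * ξ)))
    (F : EuclideanSpace ℝ (Fin n) → EuclideanSpace ℝ (Fin n))
    (hF : ∀ η, F η = G ‖η‖ • η) :
    ∀ η₁ η₂ : EuclideanSpace ℝ (Fin n),
      0 ≤ ⟪F η₁ - F η₂, η₁ - η₂⟫ := by
  obtain rfl : G = forchheimerCoeff β := funext hG
  intro η₁ η₂
  rw [hF, hF]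
  exact inner_smul_norm_sub_smul_norm_nonneg (fun ξ _ => forchheimerCoeff_nonneg β ξ)
    (monotoneOn_mul_forchheimerCoeff hβ) η₁ η₂

theorem forchheimer_map_monotone
    (n : ℕ) (hn : 1 ≤ n) (β : ℝ) (hβ : 0 < β)
    (G : ℝ → ℝ)
    (hG : ∀ ξ, G ξ = 2 / (1 + Real.sqrt (1 + 4 * β * ξ)))
    (F : EuclideanSpace ℝ (Fin n) → EuclideanSpace ℝ (Fin n))
    (hF : ∀ η, F η = G ‖η‖ • η) :
    ∀ η₁ η₂ : EuclideanSpace ℝ (Fin n),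
      0 ≤ ⟪F η₁ - F η₂, η₁ - η₂⟫ :=
  forchheimer_map_monotone_general n β hβ G hG F hF
end

section
/- Large-gradient limit of the parallel-flow upscaled Forchheimer coefficient: with the same definitions, let v_i(ξ) = 2k_i ξ/(1+√(1+4β_i k_i ξ)) be the actual per-layer speed and β*(ξ) = (Σ_i β_i v_i(ξ)² h_i/H)/(Σ_i v_i(ξ) h_i/H)²; then as ξ→∞, β*(ξ) → ((1/H)Σ_i k_i h_i) / ((1/H)Σ_i √(k_i/β_i) h_i )². -/
open Filter Real

private lemma aux_layer (k β : ℝ) (hk : 0 < k) (hβ : 0 < β) :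
    Tendsto (fun ξ : ℝ => (2 * k * ξ / (1 + Real.sqrt (1 + 4 * β * k * ξ))) / Real.sqrt ξ)
      atTop (nhds (Real.sqrt (k / β))) := by
  have ha : Tendsto (fun ξ : ℝ => 1 / ξ) atTop (nhds 0) := by
    simpa [one_div] using (tendsto_inv_atTop_zero : Tendsto (fun ξ : ℝ => ξ⁻¹) atTop (nhds 0))
  have hb : Tendsto (fun ξ : ℝ => 1 / ξ + 4 * β * k) atTop (nhds (4 * β * k)) := by
    simpa using ha.add_const (4 * β * k)
  have hc : Tendsto (fun ξ : ℝ => Real.sqrt (1 / ξ + 4 * β * k)) atTop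
      (nhds (Real.sqrt (4 * β * k))) :=
    (Real.continuous_sqrt.tendsto _).comp hb
  have hd : Tendsto (fun ξ : ℝ => 1 / Real.sqrt ξ) atTop (nhds 0) := by
    have := (Real.continuous_sqrt.tendsto 0).comp ha
    simpa [Function.comp_def, one_div, Real.sqrt_inv] using this
  have hlim : Tendsto (fun ξ : ℝ => (Real.sqrt (1 / ξ + 4 * β * k) - 1 / Real.sqrt ξ) / (2 * β))
      atTop (nhds (Real.sqrt (k / β))) := by
    have := (hc.sub hd).div_const (2 * β)
    have hval : (Real.sqrt (4 * β * k) - 0) / (2 * β) = Real.sqrt (k / β) := by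
      have h1 : (4 * β * k) = (2 * β) ^ 2 * (k / β) := by field_simp; ring
      rw [sub_zero, h1, Real.sqrt_mul (sq_nonneg _), Real.sqrt_sq (by positivity)]
      rw [mul_comm, mul_div_assoc, div_self (by positivity : (2:ℝ) * β ≠ 0), mul_one]
    rwa [hval] at this
  refine hlim.congr' ?_
  filter_upwards [eventually_gt_atTop (0 : ℝ)] with ξ hξ
  have hs0 : (0:ℝ) ≤ 1 + 4 * β * k * ξ := by positivity
  set s := Real.sqrt (1 + 4 * β * k * ξ) with hs
  have hs2 : s ^ 2 = 1 + 4 * β * k * ξ := Real.sq_sqrt hs0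
  have hsd : (0:ℝ) < 1 + s := by have := Real.sqrt_nonneg (1 + 4 * β * k * ξ); linarith
  have hv1 : 2 * k * ξ / (1 + s) = (s - 1) / (2 * β) := by
    rw [div_eq_div_iff hsd.ne' (by positivity)]
    nlinarith [hs2]
  have hsr : s / Real.sqrt ξ = Real.sqrt (1 / ξ + 4 * β * k) := by
    rw [hs, ← Real.sqrt_div hs0]
    congr 1
    field_simp
  have hsξ : Real.sqrt ξ ≠ 0 := (Real.sqrt_pos.mpr hξ).ne'
  rw [hv1, ← hsr, ← sub_div, div_div, div_div, mul_comm]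

theorem betastar_large_gradient_limit
    (n : ℕ) (hn : 1 ≤ n)
    (h k β : Fin n → ℝ) (H : ℝ)
    (hh : ∀ i, 0 < h i) (hk : ∀ i, 0 < k i) (hβ : ∀ i, 0 < β i)
    (hH : ∑ i, h i = H)
    (v : Fin n → ℝ → ℝ)
    (hv : ∀ i ξ, v i ξ = 2 * k i * ξ / (1 + Real.sqrt (1 + 4 * β i * k i * ξ)))
    (βstar : ℝ → ℝ)
    (hβstar : ∀ ξ, βstar ξ =
      (∑ i, β i * (v i ξ) ^ 2 * (h i / H)) / (∑ i, v i ξ * (h i / H)) ^ 2) :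
    Filter.Tendsto βstar Filter.atTop
      (nhds (((1 / H) * ∑ i, k i * h i) /
        ((1 / H) * ∑ i, Real.sqrt (k i / β i) * h i) ^ 2)) := by
  have hne : Nonempty (Fin n) := ⟨⟨0, hn⟩⟩
  have hHpos : 0 < H := by
    rw [← hH]; exact Finset.sum_pos (fun i _ => hh i) Finset.univ_nonempty
  set c : Fin n → ℝ := fun i => Real.sqrt (k i / β i) with hc
  have hvi : ∀ i, Tendsto (fun ξ : ℝ => v i ξ / Real.sqrt ξ) atTop (nhds (c i)) := by
    intro i
    have := aux_layer (k i) (β i) (hk i) (hβ i)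
    refine this.congr fun ξ => ?_
    rw [hv]
  -- limits of numerator and denominator (rescaled)
  have hNlim : Tendsto (fun ξ : ℝ => ∑ i, β i * (v i ξ / Real.sqrt ξ) ^ 2 * (h i / H)) atTop
      (nhds (∑ i, β i * (c i) ^ 2 * (h i / H))) :=
    tendsto_finset_sum _ fun i _ => (((hvi i).pow 2).const_mul (β i)).mul_const _
  have hDlim : Tendsto (fun ξ : ℝ => ∑ i, (v i ξ / Real.sqrt ξ) * (h i / H)) atTop
      (nhds (∑ i, c i * (h i / H))) :=
    tendsto_finset_sum _ fun i _ => (hvi i).mul_const _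
  have hLpos : 0 < ∑ i, c i * (h i / H) := by
    refine Finset.sum_pos (fun i _ => ?_) Finset.univ_nonempty
    exact mul_pos (Real.sqrt_pos.mpr (div_pos (hk i) (hβ i))) (div_pos (hh i) hHpos)
  have hmain : Tendsto (fun ξ : ℝ =>
      (∑ i, β i * (v i ξ / Real.sqrt ξ) ^ 2 * (h i / H)) /
        (∑ i, (v i ξ / Real.sqrt ξ) * (h i / H)) ^ 2) atTop
      (nhds ((∑ i, β i * (c i) ^ 2 * (h i / H)) / (∑ i, c i * (h i / H)) ^ 2)) :=
    hNlim.div (hDlim.pow 2) (pow_ne_zero _ hLpos.ne')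
  -- identify the limit value
  have hval : (∑ i, β i * (c i) ^ 2 * (h i / H)) / (∑ i, c i * (h i / H)) ^ 2 =
      ((1 / H) * ∑ i, k i * h i) / ((1 / H) * ∑ i, Real.sqrt (k i / β i) * h i) ^ 2 := by
    congr 1
    · rw [Finset.mul_sum]
      refine Finset.sum_congr rfl fun i _ => ?_
      have hβ0 : β i ≠ 0 := (hβ i).ne'
      have hH0 : H ≠ 0 := hHpos.ne'
      rw [hc, Real.sq_sqrt (div_pos (hk i) (hβ i)).le]
      field_simp
    · congr 1
      rw [Finset.mul_sum]
      refine Finset.sum_congr rfl fun i _ => ?_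
      ring
  rw [← hval]
  refine hmain.congr' ?_
  filter_upwards [eventually_gt_atTop (0 : ℝ)] with ξ hξ
  have hsq : Real.sqrt ξ ^ 2 = ξ := Real.sq_sqrt hξ.le
  have hN : (∑ i, β i * (v i ξ / Real.sqrt ξ) ^ 2 * (h i / H)) =
      (∑ i, β i * (v i ξ) ^ 2 * (h i / H)) / ξ := by
    rw [Finset.sum_div]
    refine Finset.sum_congr rfl fun i _ => ?_
    rw [div_pow, hsq]
    ring
  have hD : (∑ i, (v i ξ / Real.sqrt ξ) * (h i / H)) =
      (∑ i, v i ξ * (h i / H)) / Real.sqrt ξ := by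
    rw [Finset.sum_div]
    refine Finset.sum_congr rfl fun i _ => ?_
    ring
  rw [hN, hD, div_pow, hsq, hβstar, div_div_div_comm, div_self hξ.ne', div_one]
end

section
/- Strong monotonicity on bounded sets: for β > 0 and F(η) = (2/(1+√(1+4β‖η‖)))·η on ℝⁿ, for any η₁, η₂ with ‖η₁‖, ‖η₂‖ ≤ R one has ⟨F(η₁) − F(η₂), η₁ − η₂⟩ ≥ (G(R)/2)·‖η₁ − η₂‖², where G(R) = 2/(1+√(1+4βR)). -/
open scoped RealInnerProductSpace

private lemma sqrt_sq_aux (β x : ℝ) (hβ : 0 < β) (hx : 0 ≤ x) :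
    Real.sqrt (1 + 4 * β * x) ^ 2 = 1 + 4 * β * x :=
  Real.sq_sqrt (by positivity)

private lemma one_le_sqrt_aux (β x : ℝ) (hβ : 0 < β) (hx : 0 ≤ x) :
    (1 : ℝ) ≤ Real.sqrt (1 + 4 * β * x) := by
  nlinarith [Real.sq_sqrt (by positivity : (0:ℝ) ≤ 1 + 4 * β * x),
    Real.sqrt_nonneg (1 + 4 * β * x)]

private lemma G_mul_self (β x : ℝ) (hβ : 0 < β) (hx : 0 ≤ x) :
    (2 / (1 + Real.sqrt (1 + 4 * β * x))) * x
      = (Real.sqrt (1 + 4 * β * x) - 1) / (2 * β) := by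
  have hs := sqrt_sq_aux β x hβ hx
  have hs1 := one_le_sqrt_aux β x hβ hx
  have hpos : (0:ℝ) < 1 + Real.sqrt (1 + 4 * β * x) := by linarith
  field_simp
  nlinarith [hs]

private lemma G_anti (β x R : ℝ) (hβ : 0 < β) (hx : 0 ≤ x) (hxR : x ≤ R) :
    2 / (1 + Real.sqrt (1 + 4 * β * R)) ≤ 2 / (1 + Real.sqrt (1 + 4 * β * x)) := by
  have h1 := one_le_sqrt_aux β x hβ hx
  have h2 : Real.sqrt (1 + 4 * β * x) ≤ Real.sqrt (1 + 4 * β * R) :=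
    Real.sqrt_le_sqrt (by nlinarith)
  apply div_le_div_of_nonneg_left (by norm_num) (by linarith) (by linarith)

private lemma key_scalar (β R a b : ℝ) (hβ : 0 < β) (ha : 0 ≤ a) (hb : 0 ≤ b)
    (haR : a ≤ R) (hbR : b ≤ R) :
    (2 / (1 + Real.sqrt (1 + 4 * β * R)) / 2) * (a - b) ^ 2 ≤
      ((2 / (1 + Real.sqrt (1 + 4 * β * a))) * a
        - (2 / (1 + Real.sqrt (1 + 4 * β * b))) * b) * (a - b) := by
  rw [G_mul_self β a hβ ha, G_mul_self β b hβ hb]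
  set sa := Real.sqrt (1 + 4 * β * a) with hsa
  set sb := Real.sqrt (1 + 4 * β * b) with hsb
  set sR := Real.sqrt (1 + 4 * β * R) with hsR
  have hRpos : 0 ≤ R := le_trans ha haR
  have h1 := sqrt_sq_aux β a hβ ha
  have h2 := sqrt_sq_aux β b hβ hb
  have h3 := sqrt_sq_aux β R hβ hRpos
  have h4 := one_le_sqrt_aux β a hβ ha
  have h5 := one_le_sqrt_aux β b hβ hb
  have h6 := one_le_sqrt_aux β R hβ hRpos
  have h7 : sa ≤ sR := Real.sqrt_le_sqrt (by nlinarith)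
  have h8 : sb ≤ sR := Real.sqrt_le_sqrt (by nlinarith)
  have hab : a - b = (sa - sb) * (sa + sb) / (4 * β) := by
    have : sa ^ 2 - sb ^ 2 = 4 * β * (a - b) := by rw [h1, h2]; ring
    field_simp
    nlinarith [this]
  rw [hab]
  have key : 0 ≤ (sa - sb) ^ 2 * ((sa + sb) * (2 * (1 + sR) - (sa + sb))) := by
    apply mul_nonneg (sq_nonneg _)
    apply mul_nonneg (by linarith) (by linarith)
  have h9 : (0:ℝ) < 1 + sR := by linarith
  rw [← sub_nonneg]
  have heq : ((sa - 1) / (2 * β) - (sb - 1) / (2 * β)) * ((sa - sb) * (sa + sb) / (4 * β))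
      - 2 / (1 + sR) / 2 * ((sa - sb) * (sa + sb) / (4 * β)) ^ 2
      = (sa - sb) ^ 2 * ((sa + sb) * (2 * (1 + sR) - (sa + sb)))
        / (16 * β ^ 2 * (1 + sR)) := by
    field_simp
    ring
  rw [heq]
  exact div_nonneg key (by positivity)

theorem forchheimer_strong_monotonicity_bounded
    (n : ℕ) (hn : 1 ≤ n) (β : ℝ) (hβ : 0 < β)
    (G : ℝ → ℝ)
    (hG : ∀ ξ, G ξ = 2 / (1 + Real.sqrt (1 + 4 * β * ξ)))
    (F : EuclideanSpace ℝ (Fin n) → EuclideanSpace ℝ (Fin n))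
    (hF : ∀ η, F η = G ‖η‖ • η)
    (R : ℝ) (hR : 0 < R) :
    ∀ η₁ η₂ : EuclideanSpace ℝ (Fin n), ‖η₁‖ ≤ R → ‖η₂‖ ≤ R →
      (G R / 2) * ‖η₁ - η₂‖ ^ 2 ≤ ⟪F η₁ - F η₂, η₁ - η₂⟫ := by
  intro η₁ η₂ h₁ h₂
  set a := ‖η₁‖ with ha
  set b := ‖η₂‖ with hb
  have ha0 : 0 ≤ a := norm_nonneg _
  have hb0 : 0 ≤ b := norm_nonneg _
  set t := ⟪η₁, η₂⟫ with ht
  have htab : t ≤ a * b := real_inner_le_norm η₁ η₂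
  have hnorm : ‖η₁ - η₂‖ ^ 2 = a ^ 2 - 2 * t + b ^ 2 := by
    rw [@norm_sub_sq_real]
  have hinner : ⟪F η₁ - F η₂, η₁ - η₂⟫
      = G a * a ^ 2 + G b * b ^ 2 - (G a + G b) * t := by
    rw [hF η₁, hF η₂, ← ha, ← hb]
    simp only [inner_sub_left, inner_sub_right, real_inner_smul_left,
      real_inner_self_eq_norm_sq]
    have hc : (inner ℝ η₂ η₁ : ℝ) = t := by rw [ht]; exact real_inner_comm η₁ η₂
    rw [hc]
    ring
  have hkey := key_scalar β R a b hβ ha0 hb0 h₁ h₂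
  have hGa := G_anti β a R hβ ha0 h₁
  have hGb := G_anti β b R hβ hb0 h₂
  have hGR : 0 < 2 / (1 + Real.sqrt (1 + 4 * β * R)) := by
    have := one_le_sqrt_aux β R hβ hR.le
    positivity
  rw [hG R, hG a, hG b] at *
  rw [hinner, hnorm]
  nlinarith [hkey, mul_nonneg (by linarith : (0:ℝ) ≤ 2 / (1 + Real.sqrt (1 + 4 * β * a)) + 2 / (1 + Real.sqrt (1 + 4 * β * b)) - 2 / (1 + Real.sqrt (1 + 4 * β * R))) (by linarith : (0:ℝ) ≤ a * b - t)]
end
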